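/- arXiv:2211.10516 — 3 statements merged into one kernel-verified Lean document; each statement's English description precedes it below -/
import Mathlib

section
/- Let weighted balls with weights w_1, …, w_m summing to W be placed independently and uniformly at random into P bins, where each weight satisfies w_i < W/(P log P). Then with high probability in P, every bin receives total weight O(W/P). -/
/-!
Fix a bin `b`. Its load is the sum of the independent variables `w i * 1[X i = b]`, of total
mean `W / P`. For `t = P log P / W` every `t * w i` lies in `[0, 1]`, where convexity gives
`exp x ≤ 1 + (e - 1) x`; hence the moment generating function of the load at `t` is at most
`exp ((e - 1) log P)`, and the Chernoff bound gives
`ℙ (load ≥ (e + 2) W / P) ≤ exp (-(e + 2) log P + (e - 1) log P) = P ^ (-3)`.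
A union bound over the `P` bins leaves a failure probability of at most `P ^ (-2)`.
-/

open MeasureTheory ProbabilityTheory Real

lemma exp_le_one_add_exp_one_sub_one_mul {x : ℝ} (hx0 : 0 ≤ x) (hx1 : x ≤ 1) :
    exp x ≤ 1 + (exp 1 - 1) * x := by
  have h := convexOn_exp.2 (Set.mem_univ 0) (Set.mem_univ 1) (sub_nonneg.2 hx1) hx0
    (sub_add_cancel 1 x)
  simp only [smul_eq_mul, mul_zero, mul_one, zero_add, exp_zero] at h
  linarith

section

variable {Ω : Type*} [MeasurableSpace Ω] {μ : Measure Ω} [IsProbabilityMeasure μ] {A : Set Ω}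

lemma mgf_indicator_const (hA : MeasurableSet A) (v t : ℝ) :
    mgf (A.indicator fun _ => v) μ t = 1 + μ.real A * (exp (t * v) - 1) := by
  have hexp : (fun ω => exp (t * A.indicator (fun _ => v) ω)) =
      fun ω => A.indicator (fun _ => exp (t * v) - 1) ω + 1 := by
    funext ω
    by_cases h : ω ∈ A <;> simp [h]
  rw [mgf, hexp, integral_add ((integrable_const _).indicator hA) (integrable_const 1),
    integral_indicator_const _ hA, integral_const]
  simp [add_comm]

lemma mgf_indicator_const_le (hA : MeasurableSet A) {v t : ℝ} (h0 : 0 ≤ t * v)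
    (h1 : t * v ≤ 1) :
    mgf (A.indicator fun _ => v) μ t ≤ exp ((exp 1 - 1) * μ.real A * (t * v)) := by
  rw [mgf_indicator_const hA]
  have hlin : exp (t * v) - 1 ≤ (exp 1 - 1) * (t * v) := by
    linarith [exp_le_one_add_exp_one_sub_one_mul h0 h1]
  calc 1 + μ.real A * (exp (t * v) - 1)
      ≤ (exp 1 - 1) * μ.real A * (t * v) + 1 := by
        nlinarith [measureReal_nonneg (μ := μ) (s := A)]
    _ ≤ _ := add_one_le_exp _

lemma one_sub_ofReal_le_measure {E : Set Ω} {q : ℝ} (h : μ.real Eᶜ ≤ q) :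
    1 - ENNReal.ofReal q ≤ μ E := by
  have hcompl : μ Eᶜ ≤ ENNReal.ofReal q := by
    rw [← ofReal_measureReal]
    exact ENNReal.ofReal_le_ofReal h
  calc 1 - ENNReal.ofReal q ≤ 1 - μ Eᶜ := tsub_le_tsub_left hcompl 1
    _ ≤ μ E := by
      rw [tsub_le_iff_right, ← measure_univ (μ := μ)]
      exact measure_univ_le_add_compl E

end

section BinLoad

variable {Ω ι α : Type*} [Fintype ι] [DecidableEq α]

def binLoad (X : ι → Ω → α) (w : ι → ℝ) (b : α) (ω : Ω) : ℝ :=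
  ∑ i ∈ Finset.univ.filter (fun i => X i ω = b), w i

variable {X : ι → Ω → α} {w : ι → ℝ}

lemma binLoad_le_sum (hw : ∀ i, 0 ≤ w i) (b : α) (ω : Ω) : binLoad X w b ω ≤ ∑ i, w i :=
  Finset.sum_le_sum_of_subset_of_nonneg (Finset.filter_subset _ _) fun i _ _ => hw i

lemma binLoad_eq_sum_indicator (b : α) :
    binLoad X w b = ∑ i, (X i ⁻¹' {b}).indicator fun _ => w i := by
  funext ω
  rw [binLoad, Finset.sum_filter, Finset.sum_apply]
  refine Finset.sum_congr rfl fun i _ => ?_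
  by_cases h : X i ω = b <;> simp [h]

variable [MeasurableSpace Ω] {μ : Measure Ω}

lemma measureReal_compl_forall_binLoad_le_card_mul [IsFiniteMeasure μ] [Fintype α] {ε q : ℝ}
    (h : ∀ b, μ.real {ω | ε ≤ binLoad X w b ω} ≤ q) :
    μ.real {ω | ∀ b, binLoad X w b ω ≤ ε}ᶜ ≤ Fintype.card α * q :=
  calc μ.real {ω | ∀ b, binLoad X w b ω ≤ ε}ᶜ
      ≤ μ.real (⋃ b, {ω | ε ≤ binLoad X w b ω}) := measureReal_mono fun ω hω => by
        simp only [Set.mem_compl_iff, Set.mem_ofPred_eq, not_forall, not_le] at hω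
        exact Set.mem_iUnion.2 (hω.imp fun _ => le_of_lt)
    _ ≤ ∑ b, μ.real {ω | ε ≤ binLoad X w b ω} := measureReal_iUnion_fintype_le _
    _ ≤ Fintype.card α * q := by
        simpa using Finset.sum_le_sum fun b (_ : b ∈ Finset.univ) => h b

variable [IsProbabilityMeasure μ] [MeasurableSpace α] [MeasurableSingletonClass α]

lemma measurable_binLoad (hX : ∀ i, Measurable (X i)) (b : α) : Measurable (binLoad X w b) := by
  rw [binLoad_eq_sum_indicator, Finset.sum_fn]
  exact Finset.measurable_sum _ fun i _ =>
    measurable_const.indicator (f := fun _ => w i) (hX i (measurableSet_singleton b))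

lemma mgf_binLoad_le (hX : ∀ i, Measurable (X i))
    (hindep : iIndepFun X μ) {b : α} {p t : ℝ} (hp : ∀ i, μ.real (X i ⁻¹' {b}) ≤ p)
    (hw : ∀ i, 0 ≤ w i) (ht : 0 ≤ t) (htw : ∀ i, t * w i ≤ 1) :
    mgf (binLoad X w b) μ t ≤ exp ((exp 1 - 1) * p * t * ∑ i, w i) := by
  set Y : ι → Ω → ℝ := fun i => (X i ⁻¹' {b}).indicator fun _ => w i
  have hYmeas : ∀ i, Measurable (Y i) := fun i =>
    measurable_const.indicator (hX i (measurableSet_singleton b))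
  have hYindep : iIndepFun Y μ :=
    hindep.comp _ fun i => measurable_const.indicator (measurableSet_singleton b)
  rw [binLoad_eq_sum_indicator, hYindep.mgf_sum hYmeas, Finset.mul_sum, exp_sum]
  refine Finset.prod_le_prod (fun i _ => mgf_nonneg) fun i _ => ?_
  refine (mgf_indicator_const_le (hX i (measurableSet_singleton b))
    (mul_nonneg ht (hw i)) (htw i)).trans (exp_le_exp.2 ?_)
  have : 0 ≤ (exp 1 - 1) * (t * w i) :=
    mul_nonneg (by linarith [add_one_le_exp 1]) (mul_nonneg ht (hw i))
  nlinarith [hp i]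

lemma measureReal_binLoad_ge_le (hX : ∀ i, Measurable (X i))
    (hindep : iIndepFun X μ) {b : α} {p t : ℝ} (hp : ∀ i, μ.real (X i ⁻¹' {b}) ≤ p)
    (hw : ∀ i, 0 ≤ w i) (ht : 0 ≤ t) (htw : ∀ i, t * w i ≤ 1) (ε : ℝ) :
    μ.real {ω | ε ≤ binLoad X w b ω} ≤ exp (-t * ε + (exp 1 - 1) * p * t * ∑ i, w i) := by
  have hint : Integrable (fun ω => exp (t * binLoad X w b ω)) μ := by
    refine Integrable.of_bound (C := exp (t * ∑ i, w i))
      ((measurable_binLoad hX b).const_mul t).exp.aestronglyMeasurable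
      (Filter.Eventually.of_forall fun ω => ?_)
    rw [norm_of_nonneg (exp_nonneg _), exp_le_exp]
    exact mul_le_mul_of_nonneg_left (binLoad_le_sum hw b ω) ht
  calc μ.real {ω | ε ≤ binLoad X w b ω} ≤ exp (-t * ε) * mgf (binLoad X w b) μ t :=
        measure_ge_le_exp_mul_mgf ε ht hint
    _ ≤ _ := by
        rw [exp_add]
        exact mul_le_mul_of_nonneg_left (mgf_binLoad_le hX hindep hp hw ht htw) (exp_nonneg _)

lemma measureReal_binLoad_ge_le_rpow (hX : ∀ i, Measurable (X i)) (hindep : iIndepFun X μ)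
    {n : ℕ} (hn : 1 < (n : ℝ)) {b : α} (hp : ∀ i, μ.real (X i ⁻¹' {b}) ≤ (n : ℝ)⁻¹)
    (hw : ∀ i, 0 ≤ w i) (hW : 0 < ∑ i, w i)
    (hwlt : ∀ i, w i < (∑ j, w j) / (n * log n)) :
    μ.real {ω | (exp 1 + 2) * (∑ i, w i) / n ≤ binLoad X w b ω} ≤ (n : ℝ) ^ (-3 : ℝ) := by
  have hn0 : (0 : ℝ) < n := by linarith
  have hlog : 0 < log n := log_pos hn
  have htw : ∀ i, n * log n / (∑ j, w j) * w i ≤ 1 := fun i => by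
    have := hwlt i
    rw [lt_div_iff₀ (by positivity)] at this
    rw [div_mul_eq_mul_div, div_le_one hW]
    linarith
  refine (measureReal_binLoad_ge_le hX hindep hp hw (by positivity) htw _).trans_eq ?_
  rw [rpow_def_of_pos hn0]
  congr 1
  field_simp
  ring

end BinLoad

/-- weighted balls with total weight W, each weight < W/(P log P), placed
independently uniformly at random into P bins; whp every bin gets total weight O(W/P). -/
theorem stmt_3 :
    ∃ C : ℝ, 0 < C ∧ ∃ c' : ℝ, 1 ≤ c' ∧
    ∀ (P m : ℕ), 2 ≤ P →
    ∀ (w : Fin m → ℝ), (∀ i, 0 ≤ w i) →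
    (∀ i, w i < (∑ j, w j) / (P * Real.log P)) →
    ∀ (Ω : Type) [MeasureSpace Ω] [IsProbabilityMeasure (ℙ : Measure Ω)]
      (X : Fin m → Ω → Fin P),
      (∀ i, Measurable (X i)) →
      iIndepFun X ℙ →
      (∀ i b, ℙ {ω | X i ω = b} = (P : ENNReal)⁻¹) →
      1 - ENNReal.ofReal ((P : ℝ) ^ (-c')) ≤
        ℙ {ω | ∀ b : Fin P,
          (∑ i ∈ Finset.univ.filter (fun i => X i ω = b), w i) ≤ C * (∑ j, w j) / P} := by
  refine ⟨exp 1 + 2, by positivity, 2, one_le_two, ?_⟩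
  intro P m hP w hw hwlt Ω _ _ X hX hindep hunif
  rcases (Finset.sum_nonneg fun i _ => hw i).eq_or_lt with hW0 | hW
  · refine tsub_le_self.trans (measure_univ.symm.trans_le (measure_mono fun ω _ b => ?_))
    exact (binLoad_le_sum hw b ω).trans_eq (by rw [← hW0]; simp)
  have hP1 : (1 : ℝ) < P := by exact_mod_cast hP
  have hp : ∀ i b, (ℙ : Measure Ω).real (X i ⁻¹' {b}) ≤ (P : ℝ)⁻¹ := fun i b => by
    rw [measureReal_def, show X i ⁻¹' {b} = {ω | X i ω = b} from rfl, hunif i b,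
      ENNReal.toReal_inv, ENNReal.toReal_natCast]
  apply one_sub_ofReal_le_measure
  refine (measureReal_compl_forall_binLoad_le_card_mul fun b =>
    measureReal_binLoad_ge_le_rpow hX hindep hP1 (hp · b) hw hW hwlt).trans_eq ?_
  rw [Fintype.card_fin, ← rpow_one_add' (Nat.cast_nonneg P) (by norm_num)]
  norm_num
end

section
/- Suppose S ≥ c·K·P·log P queries are distributed over nodes, and every node receiving more than K queries is 'pulled', costing communication equal to the node's size, where node sizes are independent geometric random variables with expectation B. If nodes are placed independently uniformly at random among P bins, then with high probability in P each bin incurs O(B·S/(K·P)) pull communication. -/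
/-!
Fix a bin `b`. Its load is `∑ⱼ Yⱼ` with `Yⱼ = Szⱼ · [Xⱼ = b]`, independent over `j`. At
`λ = 1/(2B)` a geometric size satisfies `E e^{λ Sz} ≤ 7`, so independence of `Xⱼ` and `Szⱼ` gives
`E e^{λ Yⱼ} = 1 + (E e^{λ Szⱼ} - 1)/P ≤ e^{6/P}`. The Chernoff bound then gives
`P(load ≥ ε) ≤ e^{-λε + 6m/P}`, which for `ε = (12 + 4/c) B S/(KP)`, `m ≤ S/K` and
`S/(KP) ≥ c log P` is at most `P⁻²`. A union bound over the `P` bins leaves failure probability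
at most `P⁻¹`.
-/

open MeasureTheory ProbabilityTheory Real

lemma mul_exp_half_mul_inv_one_sub_exp_le {q : ℝ} (hq0 : 0 < q) (hq1 : q ≤ 1) :
    q * exp (q / 2) * (1 - exp (-(q / 2)))⁻¹ ≤ 6 := by
  -- `1 - e^{-x} ≥ x e^{-x}` is `e^x ≥ 1 + x`.
  have hden : q / 2 * exp (-(q / 2)) ≤ 1 - exp (-(q / 2)) := by
    have := add_one_le_exp (q / 2)
    have hmul := mul_le_mul_of_nonneg_right this (exp_pos (-(q / 2))).le
    rw [← exp_add, add_neg_cancel, exp_zero] at hmul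
    linarith
  calc q * exp (q / 2) * (1 - exp (-(q / 2)))⁻¹
      ≤ q * exp (q / 2) * (q / 2 * exp (-(q / 2)))⁻¹ := by gcongr
    _ = 2 * exp q := by
      rw [exp_neg, mul_inv, inv_inv, ← mul_assoc]
      field_simp
      rw [← exp_nat_mul]; ring_nf
    _ ≤ 2 * exp 1 := by gcongr
    _ ≤ 6 := by linarith [exp_one_lt_d9]

section Probability

variable {Ω : Type*} [MeasurableSpace Ω] {μ : Measure Ω} [IsProbabilityMeasure μ]

section Geometric

variable {Z : Ω → ℕ} {q : ℝ}

lemma lintegral_exp_half_mul_le_of_geometric (hZ : Measurable Z) (hq0 : 0 < q) (hq1 : q ≤ 1)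
    (hZq : ∀ s : ℕ, 1 ≤ s → μ {ω | Z ω = s} = ENNReal.ofReal (q * (1 - q) ^ (s - 1))) :
    ∫⁻ ω, ENNReal.ofReal (exp (q / 2 * Z ω)) ∂μ ≤ ENNReal.ofReal 7 := by
  have hr0 : 0 ≤ exp (-(q / 2)) := (exp_pos _).le
  have hr1 : exp (-(q / 2)) < 1 := exp_lt_one_iff.2 (by linarith)
  -- the decay `1 - q ≤ e^{-q}` of the geometric law beats the growth `e^{q/2}`
  have hterm : ∀ n : ℕ, ENNReal.ofReal (exp (q / 2 * (n + 1 : ℕ))) * μ {ω | Z ω = n + 1} ≤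
      ENNReal.ofReal (q * exp (q / 2) * exp (-(q / 2)) ^ n) := by
    intro n
    rw [hZq (n + 1) le_add_self, Nat.add_sub_cancel, ← ENNReal.ofReal_mul (exp_pos _).le]
    refine ENNReal.ofReal_le_ofReal ?_
    have hdecay : exp (q / 2) * (1 - q) ≤ exp (-(q / 2)) := by
      calc exp (q / 2) * (1 - q) ≤ exp (q / 2) * exp (-q) := by
            gcongr; linarith [add_one_le_exp (-q)]
        _ = exp (-(q / 2)) := by rw [← exp_add]; ring_nf
    calc exp (q / 2 * (n + 1 : ℕ)) * (q * (1 - q) ^ n)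
        = q * exp (q / 2) * (exp (q / 2) * (1 - q)) ^ n := by
          rw [mul_pow, ← exp_nat_mul]; push_cast
          rw [mul_add, mul_one, exp_add, mul_comm (q / 2)]; ring
      _ ≤ q * exp (q / 2) * exp (-(q / 2)) ^ n := by
          gcongr
  have hmap : ∀ s : ℕ, μ.map Z {s} = μ {ω | Z ω = s} := fun s =>
    Measure.map_apply hZ (measurableSet_singleton s)
  rw [← lintegral_map (f := fun s : ℕ => ENNReal.ofReal (exp (q / 2 * s)))
    (measurable_of_countable _) hZ, lintegral_countable',
    tsum_eq_zero_add' ENNReal.summable]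
  simp only [hmap]
  calc ENNReal.ofReal (exp (q / 2 * (0 : ℕ))) * μ {ω | Z ω = 0} +
        ∑' n : ℕ, ENNReal.ofReal (exp (q / 2 * (n + 1 : ℕ))) * μ {ω | Z ω = n + 1}
      ≤ 1 + ∑' n : ℕ, ENNReal.ofReal (q * exp (q / 2) * exp (-(q / 2)) ^ n) := by
        gcongr with n
        · simpa using prob_le_one
        · exact hterm n
    _ = ENNReal.ofReal (1 + q * exp (q / 2) * (1 - exp (-(q / 2)))⁻¹) := by
        rw [← ENNReal.ofReal_tsum_of_nonneg (fun n => by positivity)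
          ((summable_geometric_of_lt_one hr0 hr1).mul_left _), tsum_mul_left,
          tsum_geometric_of_lt_one hr0 hr1, ENNReal.ofReal_add zero_le_one (by positivity),
          ENNReal.ofReal_one]
    _ ≤ ENNReal.ofReal 7 := by
        gcongr
        linarith [mul_exp_half_mul_inv_one_sub_exp_le hq0 hq1]

lemma integrable_exp_half_mul_of_geometric (hZ : Measurable Z) (hq0 : 0 < q) (hq1 : q ≤ 1)
    (hZq : ∀ s : ℕ, 1 ≤ s → μ {ω | Z ω = s} = ENNReal.ofReal (q * (1 - q) ^ (s - 1))) :
    Integrable (fun ω => exp (q / 2 * Z ω)) μ := by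
  refine ⟨(measurable_of_countable (fun n : ℕ => exp (q / 2 * n))).comp hZ
    |>.aestronglyMeasurable, ?_⟩
  rw [hasFiniteIntegral_iff_ofReal (ae_of_all _ fun ω => (exp_pos _).le)]
  exact (lintegral_exp_half_mul_le_of_geometric hZ hq0 hq1 hZq).trans_lt ENNReal.ofReal_lt_top

lemma mgf_half_le_of_geometric (hZ : Measurable Z) (hq0 : 0 < q) (hq1 : q ≤ 1)
    (hZq : ∀ s : ℕ, 1 ≤ s → μ {ω | Z ω = s} = ENNReal.ofReal (q * (1 - q) ^ (s - 1))) :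
    mgf (fun ω => (Z ω : ℝ)) μ (q / 2) ≤ 7 := by
  rw [mgf, integral_eq_lintegral_of_nonneg_ae (ae_of_all _ fun ω => (exp_pos _).le)
    (integrable_exp_half_mul_of_geometric hZ hq0 hq1 hZq).aestronglyMeasurable]
  exact ENNReal.toReal_le_of_le_ofReal (by norm_num)
    (lintegral_exp_half_mul_le_of_geometric hZ hq0 hq1 hZq)

end Geometric

lemma mgf_ite_le_exp {α : Type*} [MeasurableSpace α] [MeasurableSingletonClass α]
    [DecidableEq α] {X : Ω → α} {Z : Ω → ℝ} (hX : Measurable X) (hZ : Measurable Z)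
    (hXZ : IndepFun X Z μ) (b : α) {t : ℝ} (hint : Integrable (fun ω => exp (t * Z ω)) μ) :
    mgf (fun ω => if X ω = b then Z ω else 0) μ t ≤
      exp (μ.real {ω | X ω = b} * (mgf Z μ t - 1)) := by
  have hsplit : (fun ω => exp (t * if X ω = b then Z ω else 0)) =
      fun ω => 1 + (if X ω = b then (1 : ℝ) else 0) * (exp (t * Z ω) - 1) := by
    funext ω; split_ifs <;> simp
  have hind : Measurable fun a : α => if a = b then (1 : ℝ) else 0 :=
    measurable_const.ite (measurableSet_singleton b) measurable_const
  have hprod : ∫ ω, (if X ω = b then (1 : ℝ) else 0) * (exp (t * Z ω) - 1) ∂μ =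
      μ.real {ω | X ω = b} * (mgf Z μ t - 1) := by
    rw [hXZ.integral_fun_comp_mul_comp (f := fun a => if a = b then (1 : ℝ) else 0)
      (g := fun z => exp (t * z) - 1) hX.aemeasurable hZ.aemeasurable
      hind.aestronglyMeasurable (by fun_prop), integral_sub hint (integrable_const 1)]
    have hXb : MeasurableSet {ω | X ω = b} := hX (measurableSet_singleton b)
    simp only [integral_const, probReal_univ, smul_eq_mul, mul_one, mgf,
      ← integral_indicator_one hXb, Set.indicator_apply, Set.mem_ofPred_eq, Pi.one_apply]
  have hprod_int : Integrable
      (fun ω => (if X ω = b then (1 : ℝ) else 0) * (exp (t * Z ω) - 1)) μ := by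
    refine (hint.sub (integrable_const 1)).bdd_mul (hind.comp hX).aestronglyMeasurable
      (c := 1) (ae_of_all _ fun ω => ?_)
    split_ifs <;> simp
  rw [mgf, hsplit, integral_add (integrable_const 1) hprod_int, hprod, integral_const,
    probReal_univ, smul_eq_mul, mul_one, add_comm]
  exact add_one_le_exp _

lemma integrable_exp_mul_ite {α : Type*} [MeasurableSpace α] [MeasurableSingletonClass α]
    [DecidableEq α] {X : Ω → α} {Z : Ω → ℝ} (hX : Measurable X) (hZ : Measurable Z)
    (b : α) {t : ℝ} (hint : Integrable (fun ω => exp (t * Z ω)) μ) :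
    Integrable (fun ω => exp (t * if X ω = b then Z ω else 0)) μ := by
  refine ((integrable_const 1).add hint).mono' ?_ (ae_of_all _ fun ω => ?_)
  · exact (Measurable.ite (hX (measurableSet_singleton b)) hZ measurable_const).const_mul t
      |>.exp.aestronglyMeasurable
  · rw [Real.norm_eq_abs, abs_exp]
    split_ifs <;> simp [(exp_pos _).le]

lemma measureReal_sum_ge_le_of_mgf_le {ι : Type*} [Fintype ι] {Y : ι → Ω → ℝ}
    (hY : ∀ i, Measurable (Y i)) (hindep : iIndepFun Y μ) {t a : ℝ} (ht : 0 ≤ t)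
    (hint : ∀ i, Integrable (fun ω => exp (t * Y i ω)) μ) (hmgf : ∀ i, mgf (Y i) μ t ≤ exp a)
    (ε : ℝ) :
    μ.real {ω | ε ≤ ∑ i, Y i ω} ≤ exp (-t * ε + Fintype.card ι * a) := by
  have hchernoff := measure_ge_le_exp_mul_mgf (X := ∑ i, Y i) ε ht
    (hindep.integrable_exp_mul_sum hY fun i _ => hint i)
  rw [hindep.mgf_sum hY] at hchernoff
  simp only [Finset.sum_apply] at hchernoff
  refine hchernoff.trans ?_
  rw [exp_add, exp_nat_mul, ← Finset.card_univ, ← Finset.prod_const]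
  gcongr with i
  exacts [fun i _ => mgf_nonneg, hmgf i]

lemma measure_sum_filter_ge_le {ι α : Type*} [Fintype ι] [MeasurableSpace α]
    [MeasurableSingletonClass α] [DecidableEq α] {X : ι → Ω → α} {Z : ι → Ω → ℕ} {p q : ℝ}
    (hX : ∀ j, Measurable (X j)) (hZ : ∀ j, Measurable (Z j))
    (hindep : iIndepFun (fun j ω => (X j ω, Z j ω)) μ) (hXZ : ∀ j, IndepFun (X j) (Z j) μ)
    (b : α) (hXb : ∀ j, μ.real {ω | X j ω = b} ≤ p) (hq0 : 0 < q) (hq1 : q ≤ 1)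
    (hZq : ∀ j, ∀ s : ℕ, 1 ≤ s → μ {ω | Z j ω = s} = ENNReal.ofReal (q * (1 - q) ^ (s - 1)))
    (ε : ℝ) :
    μ {ω | ε ≤ ∑ j ∈ Finset.univ.filter (fun j => X j ω = b), (Z j ω : ℝ)} ≤
      ENNReal.ofReal (exp (-(q / 2) * ε + Fintype.card ι * (6 * p))) := by
  let thin : α × ℕ → ℝ := fun xz => if xz.1 = b then (xz.2 : ℝ) else 0
  have hthin : Measurable thin :=
    Measurable.ite (measurable_fst (measurableSet_singleton b)) (by fun_prop) measurable_const
  have hZreal : ∀ j, Measurable fun ω => (Z j ω : ℝ) := fun j => measurable_from_nat.comp (hZ j)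
  simp only [Finset.sum_filter]
  rw [← ofReal_measureReal]
  refine ENNReal.ofReal_le_ofReal <| measureReal_sum_ge_le_of_mgf_le
    (fun j => hthin.comp ((hX j).prodMk (hZ j))) (hindep.comp (fun _ => thin) fun _ => hthin)
    (by positivity)
    (fun j => integrable_exp_mul_ite (hX j) (hZreal j) b
      (integrable_exp_half_mul_of_geometric (hZ j) hq0 hq1 (hZq j))) (fun j => ?_) ε
  refine (mgf_ite_le_exp (hX j) (hZreal j) ((hXZ j).comp measurable_id measurable_from_nat) b
    (integrable_exp_half_mul_of_geometric (hZ j) hq0 hq1 (hZq j))).trans (exp_le_exp.2 ?_)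
  have hmgf := mgf_half_le_of_geometric (hZ j) hq0 hq1 (hZq j)
  calc μ.real {ω | X j ω = b} * (mgf (fun ω => (Z j ω : ℝ)) μ (q / 2) - 1)
      ≤ μ.real {ω | X j ω = b} * 6 := by gcongr; linarith
    _ ≤ 6 * p := by linarith [hXb j]

lemma one_sub_card_mul_le_measure_forall {ι : Type*} [Fintype ι] (p : ι → Ω → Prop)
    {δ : ENNReal} (h : ∀ i, μ {ω | ¬ p i ω} ≤ δ) :
    1 - Fintype.card ι * δ ≤ μ {ω | ∀ i, p i ω} := by
  have hcompl : {ω | ∀ i, p i ω}ᶜ = ⋃ i, {ω | ¬ p i ω} := by ext; simp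
  rw [tsub_le_iff_right, ← measure_univ (μ := μ), ← Set.union_compl_self {ω | ∀ i, p i ω}]
  calc μ ({ω | ∀ i, p i ω} ∪ {ω | ∀ i, p i ω}ᶜ)
      ≤ μ {ω | ∀ i, p i ω} + ∑ i, μ {ω | ¬ p i ω} := by
        rw [hcompl]
        exact (measure_union_le _ _).trans (add_le_add_right (measure_iUnion_fintype_le _ _) _)
    _ ≤ μ {ω | ∀ i, p i ω} + Fintype.card ι * δ := by
        gcongr
        simpa using Finset.sum_le_sum fun i (_ : i ∈ Finset.univ) => h i

end Probability

-- `λε = (6 + 2/c) S/(KP)`: `6 S/(KP)` pays for the moment term `6m/P`, the rest for `2 log P`.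
lemma pull_chernoff_exponent_le {c B S : ℝ} {K P m : ℕ} (hc : 0 < c) (hB : 0 < B) (hK : 0 < K)
    (hP : 0 < P) (hm : (m : ℝ) ≤ S / K) (hS : c * K * P * log P ≤ S) :
    -(1 / B / 2) * ((12 + 4 / c) * B * S / (K * P)) + m * (6 * (P : ℝ)⁻¹) ≤
      log ((P : ℝ) ^ 2)⁻¹ := by
  have hK0 : (0 : ℝ) < K := by exact_mod_cast hK
  have hP0 : (0 : ℝ) < P := by exact_mod_cast hP
  have hlog : c * log P ≤ S / (K * P) := by
    rw [le_div_iff₀ (by positivity)]; linarith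
  have hmP : m * (P : ℝ)⁻¹ ≤ S / (K * P) := by
    rw [← div_eq_mul_inv, div_le_div_iff₀ hP0 (by positivity)]
    nlinarith [(le_div_iff₀ hK0).1 hm]
  have hscale : -(1 / B / 2) * ((12 + 4 / c) * B * S / (K * P)) =
      -(6 * (S / (K * P))) - 2 / c * (S / (K * P)) := by
    field_simp; ring
  have hlogc : 2 * log P ≤ 2 / c * (S / (K * P)) := by
    rw [div_mul_eq_mul_div, le_div_iff₀ hc]; linarith
  rw [log_inv, log_pow, hscale]
  push_cast
  linarith

/-- Pull lemma: at most S/K nodes are pulled (S ≥ c·K·P·log P), pulled node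
sizes are independent geometric with expectation B, nodes placed independently uniformly at
random into P bins; whp each bin incurs O(B·S/(K·P)) pull communication. -/
theorem stmt_10 :
    ∀ c : ℝ, 0 < c → ∃ C : ℝ, 0 < C ∧ ∃ c' : ℝ, 1 ≤ c' ∧
    ∀ (P K m : ℕ) (S B : ℝ), 2 ≤ P → 1 ≤ B → 0 < K →
    ((m : ℝ) ≤ S / K) →
    (c * K * P * Real.log P ≤ S) →
    ∀ (Ω : Type) [MeasureSpace Ω] [IsProbabilityMeasure (ℙ : Measure Ω)]
      (X : Fin m → Ω → Fin P) (Sz : Fin m → Ω → ℕ),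
      (∀ j, Measurable (X j)) → (∀ j, Measurable (Sz j)) →
      iIndepFun (fun j ω => (X j ω, Sz j ω)) ℙ →
      (∀ j, IndepFun (X j) (Sz j) ℙ) →
      (∀ j b, ℙ {ω | X j ω = b} = (P : ENNReal)⁻¹) →
      (∀ j, ∀ s : ℕ, 1 ≤ s →
        ℙ {ω | Sz j ω = s} = ENNReal.ofReal ((1 / B) * (1 - 1 / B) ^ (s - 1))) →
      1 - ENNReal.ofReal ((P : ℝ) ^ (-c')) ≤
        ℙ {ω | ∀ b : Fin P,
          (∑ j ∈ Finset.univ.filter (fun j => X j ω = b), (Sz j ω : ℝ)) ≤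
            C * B * S / (K * P)} := by
  intro c hc
  refine ⟨12 + 4 / c, by positivity, 1, le_rfl, ?_⟩
  intro P K m S B hP hB hK hm hS Ω _ _ X Sz hX hSz hindep hXSz hXunif hSzgeom
  have hbin : ∀ b : Fin P, ℙ {ω | ¬ (∑ j ∈ Finset.univ.filter (fun j => X j ω = b),
      (Sz j ω : ℝ)) ≤ (12 + 4 / c) * B * S / (K * P)} ≤ ENNReal.ofReal ((P : ℝ) ^ 2)⁻¹ := by
    intro b
    have hXb : ∀ j, (ℙ : Measure Ω).real {ω | X j ω = b} ≤ (P : ℝ)⁻¹ := fun j => by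
      simp [measureReal_def, hXunif j b]
    have htail := measure_sum_filter_ge_le hX hSz hindep hXSz b hXb (by positivity)
      (div_le_one_of_le₀ hB (by linarith)) hSzgeom ((12 + 4 / c) * B * S / (K * P))
    rw [Fintype.card_fin] at htail
    refine (measure_mono fun ω hω => (not_le.1 hω).le).trans (htail.trans ?_)
    rw [← exp_log (by positivity : (0 : ℝ) < ((P : ℝ) ^ 2)⁻¹)]
    exact ENNReal.ofReal_le_ofReal (exp_le_exp.2
      (pull_chernoff_exponent_le hc (by linarith) hK (by omega) hm hS))
  calc 1 - ENNReal.ofReal ((P : ℝ) ^ (-1 : ℝ))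
      = 1 - Fintype.card (Fin P) * ENNReal.ofReal ((P : ℝ) ^ 2)⁻¹ := by
        rw [Fintype.card_fin, ← ENNReal.ofReal_natCast, ← ENNReal.ofReal_mul (Nat.cast_nonneg P),
          rpow_neg_one]
        congr 2
        field_simp
    _ ≤ _ := one_sub_card_mul_le_measure_forall _ hbin
end

section
/- In a PIM-tree with L2 height H = log_B P − log_B log_B P and pull threshold K = B·H applied each round (pulling all nodes with ≥ K queries and advancing those queries one level), the multi-round pull loop terminates after at most H rounds, and each pulled query incurs O(1) total communication amortized over the batch with high probability. -/
/-!
Termination is immediate: the level of the queries starts at most `H` and drops by at least one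
per round until it is `0`.

For the communication, `M ≤ H · S / K = S / B`, and the total pulled size is a sum of `M`
independent geometric variables of mean `B` and variance `B² - B ≤ B²`. Chebyshev bounds the
probability that it exceeds `M B + (C - 1) S ≤ C S` by `M B² / ((C - 1) S)² ≤ B / ((C - 1)² S)`.
If `H ≥ 1`, then with `y = log_B P` the condition `y - log_B y ≥ 1` gives `log y ≤ log P - log B`,
hence `log P · y ≥ log P + y log y ≥ log 2 - 1/e > 0`; so `S ≥ c (log 2 - 1/e) P B`, and the bound
is at most `1 / P` once `(C - 1)² ≥ 1 / (c (log 2 - 1/e))`. If `H = 0` there is nothing to pull.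
-/

open MeasureTheory ProbabilityTheory

lemma exists_le_eq_zero_of_lt_of_ne_zero {n : ℕ} {f : ℕ → ℕ} (h0 : f 0 ≤ n)
    (hf : ∀ t, f t ≠ 0 → f (t + 1) < f t) : ∃ T ≤ n, f T = 0 := by
  induction n generalizing f with
  | zero => exact ⟨0, le_rfl, Nat.le_zero.mp h0⟩
  | succ n ih =>
    by_cases hf0 : f 0 = 0
    · exact ⟨0, Nat.zero_le _, hf0⟩
    · obtain ⟨T, hT, hfT⟩ := ih (f := fun t => f (t + 1)) (by have := hf 0 hf0; omega)
        fun t => hf (t + 1)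
      exact ⟨T + 1, by omega, hfT⟩

section GeometricSeries

variable {p : ℝ}

lemma hasSum_choose_mul_geometric_pmf (hp0 : 0 < p) (hp1 : p ≤ 1) (k : ℕ) :
    HasSum (fun n : ℕ => ((n + k).choose k : ℝ) * (p * (1 - p) ^ n)) (1 / p ^ k) := by
  have hq : ‖1 - p‖ < 1 := by rw [Real.norm_eq_abs, abs_lt]; constructor <;> linarith
  have h := (hasSum_choose_mul_geometric_of_norm_lt_one k hq).mul_left p
  rw [sub_sub_cancel, pow_succ, ← div_div, mul_div_cancel₀ _ hp0.ne'] at h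
  exact h.congr_fun fun n => by ring

lemma hasSum_mul_geometric_pmf (hp0 : 0 < p) (hp1 : p ≤ 1) :
    HasSum (fun n : ℕ => (n : ℝ) * (p * (1 - p) ^ (n - 1))) (1 / p) := by
  refine (hasSum_nat_add_iff' 1).mp ?_
  simpa [Nat.choose_one_right] using hasSum_choose_mul_geometric_pmf hp0 hp1 1

lemma hasSum_sq_mul_geometric_pmf (hp0 : 0 < p) (hp1 : p ≤ 1) :
    HasSum (fun n : ℕ => (n : ℝ) ^ 2 * (p * (1 - p) ^ (n - 1))) ((2 - p) / p ^ 2) := by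
  refine (hasSum_nat_add_iff' 1).mp ?_
  have h := ((hasSum_choose_mul_geometric_pmf hp0 hp1 2).mul_left 2).sub
    (hasSum_choose_mul_geometric_pmf hp0 hp1 1)
  rw [show 2 * (1 / p ^ 2) - 1 / p ^ 1 = (2 - p) / p ^ 2 by field_simp] at h
  simpa using h.congr_fun fun n => by simp [Nat.choose_one_right, Nat.cast_choose_two]; ring

end GeometricSeries

section NatValued

variable {Ω : Type*} [MeasurableSpace Ω] {μ : Measure Ω} {Z : Ω → ℕ}

lemma integrable_and_integral_comp_of_hasSum [IsFiniteMeasure μ] (hZ : Measurable Z)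
    {f : ℕ → ℝ} (hf : ∀ n, 0 ≤ f n) {a : ℝ}
    (h : HasSum (fun n => μ.real (Z ⁻¹' {n}) * f n) a) :
    Integrable (fun ω => f (Z ω)) μ ∧ ∫ ω, f (Z ω) ∂μ = a := by
  have hlaw : ∀ n, (μ.map Z).real {n} = μ.real (Z ⁻¹' {n}) := fun n =>
    map_measureReal_apply hZ (measurableSet_singleton n)
  have hint : Integrable f (μ.map Z) := by
    rw [← Measure.sum_smul_dirac (μ.map Z), integrable_sum_dirac_iff fun n => measure_ne_top _ _]
    simpa [← measureReal_def, hlaw, Real.norm_eq_abs, abs_of_nonneg (hf _)] using h.summable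
  have hf_meas : AEStronglyMeasurable f (μ.map Z) := (measurable_of_countable f).aestronglyMeasurable
  refine ⟨(integrable_map_measure hf_meas hZ.aemeasurable).mp hint, ?_⟩
  rw [← integral_map hZ.aemeasurable hf_meas, integral_countable hint]
  simpa [hlaw] using h.tsum_eq

/-- The geometric law on `{1, 2, …}` with success probability `p` (Mathlib's
`geometricMeasure` is the one on `{0, 1, …}`). -/
def HasGeometricLaw (μ : Measure Ω) (Z : Ω → ℕ) (p : ℝ) : Prop :=
  ∀ s : ℕ, 1 ≤ s → μ {ω | Z ω = s} = ENNReal.ofReal (p * (1 - p) ^ (s - 1))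

namespace HasGeometricLaw

variable {p : ℝ}

lemma hasSum_measureReal_mul (hlaw : HasGeometricLaw μ Z p) (hp0 : 0 < p) (hp1 : p ≤ 1)
    {f : ℕ → ℝ} (hf0 : f 0 = 0) {a : ℝ} (h : HasSum (fun n => f n * (p * (1 - p) ^ (n - 1))) a) :
    HasSum (fun n => μ.real (Z ⁻¹' {n}) * f n) a := by
  refine h.congr_fun fun n => ?_
  rcases Nat.eq_zero_or_pos n with rfl | hn
  · simp [hf0]
  · have hq : 0 ≤ 1 - p := by linarith
    rw [measureReal_def, show Z ⁻¹' {n} = {ω | Z ω = n} from rfl, hlaw n hn,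
      ENNReal.toReal_ofReal (by positivity), mul_comm]

lemma integral_eq [IsFiniteMeasure μ] (hlaw : HasGeometricLaw μ Z p) (hZ : Measurable Z) (hp0 : 0 < p) (hp1 : p ≤ 1) :
    ∫ ω, (Z ω : ℝ) ∂μ = 1 / p :=
  (integrable_and_integral_comp_of_hasSum hZ (fun n => n.cast_nonneg)
    (hlaw.hasSum_measureReal_mul hp0 hp1 Nat.cast_zero (hasSum_mul_geometric_pmf hp0 hp1))).2

lemma integrable_and_integral_sq_eq [IsFiniteMeasure μ] (hlaw : HasGeometricLaw μ Z p) (hZ : Measurable Z)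
    (hp0 : 0 < p) (hp1 : p ≤ 1) :
    Integrable (fun ω => (Z ω : ℝ) ^ 2) μ ∧ ∫ ω, (Z ω : ℝ) ^ 2 ∂μ = (2 - p) / p ^ 2 :=
  integrable_and_integral_comp_of_hasSum hZ (fun n => sq_nonneg (n : ℝ))
    (hlaw.hasSum_measureReal_mul hp0 hp1 (by simp) (hasSum_sq_mul_geometric_pmf hp0 hp1))

lemma memLp_two [IsFiniteMeasure μ] (hlaw : HasGeometricLaw μ Z p) (hZ : Measurable Z) (hp0 : 0 < p) (hp1 : p ≤ 1) :
    MemLp (fun ω => (Z ω : ℝ)) 2 μ :=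
  (memLp_two_iff_integrable_sq (measurable_of_countable _ |>.comp hZ).aestronglyMeasurable).mpr
    (hlaw.integrable_and_integral_sq_eq hZ hp0 hp1).1

lemma variance_eq [IsProbabilityMeasure μ] (hlaw : HasGeometricLaw μ Z p) (hZ : Measurable Z) (hp0 : 0 < p) (hp1 : p ≤ 1) :
    Var[fun ω => (Z ω : ℝ); μ] = (1 - p) / p ^ 2 := by
  rw [variance_eq_sub (hlaw.memLp_two hZ hp0 hp1)]
  simp only [Pi.pow_apply]
  rw [(hlaw.integrable_and_integral_sq_eq hZ hp0 hp1).2, hlaw.integral_eq hZ hp0 hp1]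
  field_simp
  ring

end HasGeometricLaw

end NatValued

lemma one_sub_le_measure_sum_le {ι Ω : Type*} [Fintype ι] [MeasurableSpace Ω] {μ : Measure Ω}
    [IsProbabilityMeasure μ] {Y : ι → Ω → ℝ} (hY : ∀ i, MemLp (Y i) 2 μ) (hind : iIndepFun Y μ)
    {m v t : ℝ} (hm : ∀ i, μ[Y i] ≤ m) (hv : ∀ i, Var[Y i; μ] ≤ v) (ht : 0 < t) :
    1 - ENNReal.ofReal (Fintype.card ι * v / t ^ 2) ≤
      μ {ω | ∑ i, Y i ω ≤ Fintype.card ι * m + t} := by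
  set T := ∑ i, Y i with hT_def
  have hT : ∀ ω, T ω = ∑ i, Y i ω := fun ω => Finset.sum_apply ω _ _
  have hmean : μ[T] ≤ Fintype.card ι * m := by
    simp_rw [hT, integral_finsetSum _ fun i _ => (hY i).integrable one_le_two]
    exact (Finset.sum_le_sum fun i _ => hm i).trans_eq (by simp)
  have hvar : Var[T; μ] ≤ Fintype.card ι * v := by
    rw [hT_def, IndepFun.variance_sum (fun i _ => hY i) fun i _ j _ hij => hind.indepFun hij]
    exact (Finset.sum_le_sum fun i _ => hv i).trans_eq (by simp)
  have htail : μ {ω | ∑ i, Y i ω ≤ Fintype.card ι * m + t}ᶜ ≤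
      ENNReal.ofReal (Fintype.card ι * v / t ^ 2) := by
    refine (measure_mono fun ω hω => ?_).trans
      ((meas_ge_le_variance_div_sq (memLp_finsetSum' _ fun i _ => hY i) ht).trans
        (ENNReal.ofReal_le_ofReal (div_le_div_of_nonneg_right hvar (sq_nonneg t))))
    simp only [Set.mem_compl_iff, Set.mem_ofPred_eq, not_le, ← hT] at hω ⊢
    exact (by linarith : t ≤ T ω - μ[T]).trans (le_abs_self _)
  calc 1 - ENNReal.ofReal (Fintype.card ι * v / t ^ 2)
      ≤ 1 - μ {ω | ∑ i, Y i ω ≤ Fintype.card ι * m + t}ᶜ := tsub_le_tsub_left htail 1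
    _ ≤ _ := by
      rw [tsub_le_iff_right, ← measure_univ (μ := μ)]
      exact measure_univ_le_add_compl _

lemma one_sub_le_measure_sum_le_of_hasGeometricLaw {ι Ω : Type*} [Fintype ι] [MeasurableSpace Ω]
    {μ : Measure Ω} [IsProbabilityMeasure μ] {Z : ι → Ω → ℕ} {p t : ℝ} (hZ : ∀ i, Measurable (Z i))
    (hind : iIndepFun (fun i ω => (Z i ω : ℝ)) μ) (hlaw : ∀ i, HasGeometricLaw μ (Z i) p)
    (hp0 : 0 < p) (hp1 : p ≤ 1) (ht : 0 < t) :
    1 - ENNReal.ofReal (Fintype.card ι * (1 / p ^ 2) / t ^ 2) ≤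
      μ {ω | ∑ i, (Z i ω : ℝ) ≤ Fintype.card ι * (1 / p) + t} :=
  one_sub_le_measure_sum_le (fun i => (hlaw i).memLp_two (hZ i) hp0 hp1) hind
    (fun i => ((hlaw i).integral_eq (hZ i) hp0 hp1).le)
    (fun i => ((hlaw i).variance_eq (hZ i) hp0 hp1).trans_le
      (div_le_div_of_nonneg_right (by linarith) (by positivity)))
    ht

lemma neg_mul_log_le_exp_neg_one {x : ℝ} (hx : 0 < x) : -(x * Real.log x) ≤ Real.exp (-1) := by
  simpa [Real.exp_log hx, mul_comm] using Real.mul_exp_neg_le_exp_neg_one (-Real.log x)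

lemma log_two_sub_exp_neg_one_pos : 0 < Real.log 2 - Real.exp (-1) := by
  linarith [Real.log_two_gt_d9, Real.exp_neg_one_lt_half]

lemma log_mul_logb_ge {b x : ℝ} (hb : 1 < b) (hx : 2 ≤ x)
    (hH : 1 ≤ Real.logb b x - Real.logb b (Real.logb b x)) :
    Real.log 2 - Real.exp (-1) ≤ Real.log x * Real.logb b x := by
  set y := Real.logb b x
  have hlogb : 0 < Real.log b := Real.log_pos hb
  have hlog2 : Real.log 2 ≤ Real.log x := Real.log_le_log two_pos hx
  have hy : 0 < y := Real.logb_pos hb (by linarith)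
  have hxy : Real.log x = y * Real.log b := by simp only [y, Real.logb]; field_simp
  have hlogy : Real.log y ≤ Real.log x - Real.log b := by
    have hly : Real.log b * Real.logb b y = Real.log y := by
      rw [← Real.log_div_log]; field_simp
    have := mul_le_mul_of_nonneg_left hH hlogb.le
    rw [mul_sub, hly] at this
    linarith
  have := mul_le_mul_of_nonneg_left hlogy hy.le
  nlinarith [neg_mul_log_le_exp_neg_one hy]

lemma mul_le_of_le_mul_div_mul {m b h S : ℝ} (hb : 0 < b) (hS : 0 ≤ S)
    (hm : m ≤ h * (S / (b * h))) : m * b ≤ S := by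
  rcases eq_or_ne h 0 with rfl | hh
  · simp only [mul_zero, zero_mul] at hm
    nlinarith
  · rw [show h * (S / (b * h)) = S / b by field_simp] at hm
    exact (le_div_iff₀ hb).mp hm

lemma mul_sq_div_sq_le_inv {M B P S u : ℝ} (hB : 0 ≤ B) (hP : 0 < P) (hu : 0 ≤ u) (hS : 0 < S)
    (hMB : M * B ≤ S) (hPB : P * B ≤ u * S) : M * B ^ 2 / ((1 + u) * S) ^ 2 ≤ P⁻¹ := by
  rw [div_le_iff₀ (by positivity)]
  calc M * B ^ 2 = M * B * B := by ring
    _ ≤ S * B := by gcongr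
    _ = P⁻¹ * (P * B) * S := by field_simp
    _ ≤ P⁻¹ * (u * S) * S := by gcongr
    _ = P⁻¹ * (u * S ^ 2) := by ring
    _ ≤ P⁻¹ * ((1 + u) ^ 2 * S ^ 2) := by gcongr; nlinarith
    _ = P⁻¹ * ((1 + u) * S) ^ 2 := by ring

lemma batch_mul_sq_div_sq_le_inv {c S : ℝ} {P B H M : ℕ} (hc : 0 < c) (hP : 2 ≤ P) (hB : 2 ≤ B)
    (hH : (H : ℝ) = Real.logb B P - Real.logb B (Real.logb B P))
    (hS : c * ((P : ℝ) * Real.log P * B * Real.logb B P) ≤ S) (hS0 : 0 < S)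
    (hM : (M : ℝ) ≤ H * (S / (B * H))) (hMB : (M : ℝ) * B ≤ S) :
    (M : ℝ) * B ^ 2 / ((1 + 1 / (c * (Real.log 2 - Real.exp (-1)))) * S) ^ 2 ≤ (P : ℝ)⁻¹ := by
  have ha := log_two_sub_exp_neg_one_pos
  rcases Nat.eq_zero_or_pos H with rfl | hH1
  · have hM0 : (M : ℝ) = 0 := le_antisymm (by simpa using hM) M.cast_nonneg
    rw [hM0, zero_mul, zero_div]
    positivity
  have hlog := log_mul_logb_ge (by exact_mod_cast hB : (1 : ℝ) < B)
    (by exact_mod_cast hP : (2 : ℝ) ≤ P) (by rw [← hH]; exact_mod_cast hH1)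
  refine mul_sq_div_sq_le_inv (by positivity) (by positivity) (by positivity) hS0 hMB ?_
  rw [one_div_mul_eq_div, le_div_iff₀ (by positivity)]
  linarith [mul_le_mul_of_nonneg_left hlog (by positivity : (0 : ℝ) ≤ c * (P * B))]

/-- PIM-tree L2 pull loop with height H = log_B P − log_B log_B P and threshold
K = B·H: queries advance one level per round, so the loop terminates after at most H rounds;
the total pull communication (sizes of all pulled nodes, each geometric with mean B, at most
S/K pulled per round over ≤ H rounds, nodes placed uniformly at random over P modules) is
O(S) whp, i.e. O(1) per query amortized over a batch of size S = Ω(P·log P·B·log_B P). -/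
theorem stmt_11 :
    ∀ c : ℝ, 0 < c → ∃ C : ℝ, 0 < C ∧ ∃ c' : ℝ, 1 ≤ c' ∧
    ∀ (P B H K M : ℕ) (S : ℝ), 2 ≤ P → 2 ≤ B →
    ((H : ℝ) = Real.logb B P - Real.logb B (Real.logb B P)) →
    (K = B * H) →
    (c * ((P : ℝ) * Real.log P * B * Real.logb B P) ≤ S) →
    ((M : ℝ) ≤ H * (S / K)) →
    ∀ (level : ℕ → ℕ), level 0 ≤ H → (∀ t, level t ≠ 0 → level (t + 1) < level t) →
    ∀ (Ω : Type) [MeasureSpace Ω] [IsProbabilityMeasure (ℙ : Measure Ω)]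
      (X : Fin M → Ω → Fin P) (Sz : Fin M → Ω → ℕ),
      (∀ j, Measurable (X j)) → (∀ j, Measurable (Sz j)) →
      iIndepFun (fun j ω => (X j ω, Sz j ω)) ℙ →
      (∀ j b, ℙ {ω | X j ω = b} = (P : ENNReal)⁻¹) →
      (∀ j, ∀ s : ℕ, 1 ≤ s →
        ℙ {ω | Sz j ω = s} =
          ENNReal.ofReal ((1 / (B : ℝ)) * (1 - 1 / (B : ℝ)) ^ (s - 1))) →
      ((∃ T ≤ H, level T = 0) ∧
        1 - ENNReal.ofReal ((P : ℝ) ^ (-c')) ≤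
          ℙ {ω | ∑ j, (Sz j ω : ℝ) ≤ C * S}) := by
  intro c hc
  have ha := log_two_sub_exp_neg_one_pos
  refine ⟨2 + 1 / (c * (Real.log 2 - Real.exp (-1))), by positivity, 1, le_rfl, ?_⟩
  intro P B H K M S hP hB hH hK hS hM level hlev0 hlev Ω _ _ X Sz _ hSz hind _ hlaw
  refine ⟨exists_le_eq_zero_of_lt_of_ne_zero hlev0 hlev, ?_⟩
  have hP1 : (1 : ℝ) < P := by exact_mod_cast hP
  have hB1 : (1 : ℝ) < B := by exact_mod_cast hB
  have hS0 : 0 < S := hS.trans_lt' <| mul_pos hc <| by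
    have := Real.log_pos hP1; have := Real.logb_pos hB1 hP1; positivity
  rw [hK, Nat.cast_mul] at hM
  have hMB : (M : ℝ) * B ≤ S := mul_le_of_le_mul_div_mul (by linarith) hS0.le hM
  have tail := one_sub_le_measure_sum_le_of_hasGeometricLaw (p := 1 / B)
    (t := (1 + 1 / (c * (Real.log 2 - Real.exp (-1)))) * S) hSz
    (hind.comp (fun _ q => (q.2 : ℝ)) fun _ => measurable_from_nat.comp measurable_snd) hlaw
    (by positivity) (div_le_one_of_le₀ hB1.le (by positivity)) (by positivity)
  simp only [Fintype.card_fin, one_div_one_div, one_div_pow] at tail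
  rw [Real.rpow_neg_one]
  refine (tsub_le_tsub_left (ENNReal.ofReal_le_ofReal
    (batch_mul_sq_div_sq_le_inv hc hP hB hH hS hS0 hM hMB)) 1).trans
    (tail.trans (measure_mono fun ω hω => ?_))
  simp only [Set.mem_ofPred_eq] at hω ⊢
  linarith
end
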